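/- arXiv:2306.16151 — 2 statements merged into one kernel-verified Lean document; each statement's English description precedes it below -/
import Mathlib

section
/- Let A be an (N+1)×(N+1) complex Hermitian matrix, let μ be the largest eigenvalue of A, and let E ⊆ ℂ^{N+1} be the eigenspace of A for μ. For w ∈ ℂ^{N+1}, let w_1 denote the orthogonal projection of w onto E. Then e^{−μt}·exp(tA)·w converges to w_1 as the real parameter t → +∞, where exp(tA) is the matrix exponential. -/
/-!
Expand `w` in an orthonormal eigenbasis `bᵢ` of `A`. Since `exp (tA) bᵢ = e^{tλᵢ} bᵢ`,
`e^{-μt} exp (tA) w = ∑ᵢ e^{(λᵢ - μ)t} ⟪bᵢ, w⟫ bᵢ`. The terms with `λᵢ < μ` decay, and the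
remaining ones sum to the projection of `w` onto the `μ`-eigenspace, because eigenvectors of a
Hermitian matrix for the other eigenvalues are orthogonal to it.
-/

open Filter Topology
open scoped Matrix InnerProductSpace

namespace Matrix

variable {n : Type*} [Fintype n] [DecidableEq n]

theorem pow_mulVec_of_mulVec_eq_smul {R : Type*} [CommSemiring R] {M : Matrix n n R}
    {v : n → R} {c : R} (hv : M *ᵥ v = c • v) (k : ℕ) : M ^ k *ᵥ v = c ^ k • v := by
  induction k with
  | zero => simp
  | succ k ih => rw [pow_succ', ← mulVec_mulVec, ih, mulVec_smul, hv, smul_smul, pow_succ]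

theorem exp_mulVec_of_mulVec_eq_smul {𝕜 : Type*} [RCLike 𝕜] {M : Matrix n n 𝕜} {v : n → 𝕜}
    {c : 𝕜} (hv : M *ᵥ v = c • v) : NormedSpace.exp M *ᵥ v = NormedSpace.exp c • v := by
  -- Matrices carry no global norm. With the operator norm the exponential series converges;
  -- its uniformity is not reducibly the product one, so completeness is supplied by hand.
  let : NormedRing (Matrix n n 𝕜) := Matrix.linftyOpNormedRing
  let : NormedAlgebra 𝕜 (Matrix n n 𝕜) := Matrix.linftyOpNormedAlgebra
  have : @CompleteSpace (Matrix n n 𝕜) PseudoMetricSpace.toUniformSpace :=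
    FiniteDimensional.complete 𝕜 _
  have hM := (NormedSpace.exp_series_hasSum_exp' (𝕂 := 𝕜) M).map
    (mulVec.addMonoidHomLeft v) (continuous_id.matrix_mulVec continuous_const)
  have hc := (NormedSpace.exp_series_hasSum_exp' (𝕂 := 𝕜) c).smul_const v
  refine hM.unique ?_
  simpa [Function.comp_def, mulVec.addMonoidHomLeft, smul_mulVec, smul_smul,
    pow_mulVec_of_mulVec_eq_smul hv] using hc

namespace IsHermitian

variable {𝕜 : Type*} [RCLike 𝕜] {A : Matrix n n 𝕜} (hA : A.IsHermitian)

theorem eigenvectorBasis_mem_eigenspace (i : n) :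
    hA.eigenvectorBasis i ∈ Module.End.eigenspace (toEuclideanLin A) (hA.eigenvalues i) := by
  rw [Module.End.mem_eigenspace_iff, ← RCLike.real_smul_eq_coe_smul]
  exact congrArg (WithLp.toLp 2) (hA.mulVec_eigenvectorBasis i)

theorem eigenvectorBasis_mem_orthogonal_eigenspace {i : n} {μ : ℝ} (hi : hA.eigenvalues i ≠ μ) :
    hA.eigenvectorBasis i ∈ (Module.End.eigenspace (toEuclideanLin A) (μ : 𝕜))ᗮ :=
  (isSymmetric_toEuclideanLin_iff.2 hA).orthogonalFamily_eigenspaces.isOrtho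
    (by exact_mod_cast hi) (hA.eigenvectorBasis_mem_eigenspace i)

theorem toEuclideanLin_exp_smul_eigenvectorBasis (t : ℝ) (i : n) :
    toEuclideanLin (NormedSpace.exp (t • A)) (hA.eigenvectorBasis i) =
      Real.exp (t * hA.eigenvalues i) • hA.eigenvectorBasis i := by
  have hv : (t • A) *ᵥ ⇑(hA.eigenvectorBasis i) =
      ((t * hA.eigenvalues i : ℝ) : 𝕜) • ⇑(hA.eigenvectorBasis i) := by
    rw [smul_mulVec, hA.mulVec_eigenvectorBasis, smul_smul, RCLike.real_smul_eq_coe_smul (K := 𝕜)]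
  have := congrArg (WithLp.toLp 2) (exp_mulVec_of_mulVec_eq_smul hv)
  rwa [← RCLike.algebraMap_eq_ofReal, ← NormedSpace.algebraMap_exp_comm, ← Real.exp_eq_exp_ℝ,
    RCLike.algebraMap_eq_ofReal, ← RCLike.real_smul_eq_coe_smul] at this

theorem toEuclideanLin_exp_smul_apply (t : ℝ) (w : EuclideanSpace 𝕜 n) :
    toEuclideanLin (NormedSpace.exp (t • A)) w =
      ∑ i, Real.exp (t * hA.eigenvalues i) •
        ⟪hA.eigenvectorBasis i, w⟫_𝕜 • hA.eigenvectorBasis i := by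
  conv_lhs => rw [← hA.eigenvectorBasis.sum_repr' w]
  simp only [map_sum, map_smul, hA.toEuclideanLin_exp_smul_eigenvectorBasis, smul_comm (_ : 𝕜)]

end IsHermitian

end Matrix

theorem OrthonormalBasis.starProjection_eq_sum_filter {ι 𝕜 E : Type*} [Fintype ι] [RCLike 𝕜]
    [NormedAddCommGroup E] [InnerProductSpace 𝕜 E] (b : OrthonormalBasis ι 𝕜 E)
    {K : Submodule 𝕜 E} [K.HasOrthogonalProjection] {p : ι → Prop} [DecidablePred p]
    (hmem : ∀ i, p i → b i ∈ K) (hperp : ∀ i, ¬p i → b i ∈ Kᗮ) (x : E) :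
    K.starProjection x = ∑ i with p i, ⟪b i, x⟫_𝕜 • b i := by
  refine Submodule.eq_starProjection_of_mem_orthogonal
    (Submodule.sum_mem _ fun i hi => K.smul_mem _ (hmem i (Finset.mem_filter.1 hi).2)) ?_
  have hx : ∑ i with p i, ⟪b i, x⟫_𝕜 • b i + ∑ i with ¬p i, ⟪b i, x⟫_𝕜 • b i = x := by
    rw [Finset.sum_filter_add_sum_filter_not, b.sum_repr']
  rw [sub_eq_iff_eq_add'.2 hx.symm]
  exact Submodule.sum_mem _ fun i hi => Kᗮ.smul_mem _ (hperp i (Finset.mem_filter.1 hi).2)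

theorem tendsto_sum_exp_sub_mul_smul {ι E : Type*} [Fintype ι] [TopologicalSpace E]
    [AddCommMonoid E] [Module ℝ E] [ContinuousSMul ℝ E] [ContinuousAdd E] {lam : ι → ℝ} {μ : ℝ}
    (hlam : ∀ i, lam i ≤ μ) (x : ι → E) :
    Tendsto (fun t => ∑ i, Real.exp ((lam i - μ) * t) • x i) atTop
      (𝓝 (∑ i with lam i = μ, x i)) := by
  rw [Finset.sum_filter]
  refine tendsto_finsetSum _ fun i _ => ?_
  rcases (hlam i).lt_or_eq with hlt | heq
  · have hdecay : Tendsto (fun t => Real.exp ((lam i - μ) * t)) atTop (𝓝 0) :=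
      Real.tendsto_exp_atBot.comp (tendsto_id.const_mul_atTop_of_neg (sub_neg.2 hlt))
    simpa [hlt.ne] using hdecay.smul_const (x i)
  · simp [heq, tendsto_const_nhds]

/-- Let `A` be an `(N+1) × (N+1)` Hermitian matrix, `μ` its largest
eigenvalue and `E` the eigenspace of `A` for `μ`. For `w ∈ ℂ^{N+1}`, let `w_1` be the
orthogonal projection of `w` onto `E`. Then `e^{−μt}·exp(tA)·w → w_1` as `t → +∞`. -/
theorem statement10 {N : ℕ} (A : Matrix (Fin (N + 1)) (Fin (N + 1)) ℂ)
    (hA : A.IsHermitian) (μ : ℝ) (hμ : IsGreatest (Set.range hA.eigenvalues) μ)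
    (w : EuclideanSpace ℂ (Fin (N + 1))) :
    Tendsto
      (fun t : ℝ =>
        Real.exp (-μ * t) • Matrix.toEuclideanLin (NormedSpace.exp (t • A)) w)
      atTop
      (nhds ((Submodule.orthogonalProjectionOnto
        (Module.End.eigenspace (Matrix.toEuclideanLin A) (μ : ℂ)) w :
          EuclideanSpace ℂ (Fin (N + 1))))) := by
  have hprojection : (Submodule.orthogonalProjectionOnto
      (Module.End.eigenspace (Matrix.toEuclideanLin A) (μ : ℂ)) w : EuclideanSpace ℂ (Fin (N + 1)))
        = ∑ i with hA.eigenvalues i = μ, ⟪hA.eigenvectorBasis i, w⟫_ℂ • hA.eigenvectorBasis i :=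
    hA.eigenvectorBasis.starProjection_eq_sum_filter
      (fun i hi => hi ▸ hA.eigenvectorBasis_mem_eigenspace i)
      (fun i hi => hA.eigenvectorBasis_mem_orthogonal_eigenspace hi) w
  have hexpand (t : ℝ) : Real.exp (-μ * t) • Matrix.toEuclideanLin (NormedSpace.exp (t • A)) w
      = ∑ i, Real.exp ((hA.eigenvalues i - μ) * t) •
          ⟪hA.eigenvectorBasis i, w⟫_ℂ • hA.eigenvectorBasis i := by
    rw [hA.toEuclideanLin_exp_smul_apply, Finset.smul_sum]
    refine Finset.sum_congr rfl fun i _ => ?_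
    rw [smul_smul, ← Real.exp_add]
    ring_nf
  rw [hprojection]
  simpa only [hexpand] using tendsto_sum_exp_sub_mul_smul (fun i => hμ.2 ⟨i, rfl⟩) _
end

section
/- Let M be a connected, Hausdorff topological space that is locally Euclidean (every point has an open neighborhood homeomorphic to an open subset of some ℝⁿ) and metrizable. Then M is second countable (its topology has a countable basis). -/
/-!
Charts make the space locally compact, and a metrizable space is paracompact, so it has a
locally finite open cover by sets with compact closures. Starting from a point and repeatedly
adjoining the closures of the finitely many members of the cover that meet the compact set
built so far gives an increasing sequence of compact sets whose union is clopen, hence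
everything. A σ-compact metrizable space is second countable.
-/

open Set Topology

section

variable {X ι : Type*} [TopologicalSpace X]

theorem weaklyLocallyCompactSpace_of_forall_homeomorph_isOpen {E : ι → Type*}
    [∀ i, TopologicalSpace (E i)] [∀ i, LocallyCompactSpace (E i)]
    (h : ∀ x : X, ∃ (i : ι) (U : Set X) (V : Set (E i)),
      x ∈ U ∧ IsOpen U ∧ IsOpen V ∧ Nonempty (U ≃ₜ V)) :
    WeaklyLocallyCompactSpace X where
  exists_compact_mem_nhds x := by
    obtain ⟨i, U, V, hxU, hU, hV, ⟨e⟩⟩ := h x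
    have : LocallyCompactSpace V := hV.locallyCompactSpace
    have : LocallyCompactSpace U := e.locallyCompactSpace_iff.2 inferInstance
    obtain ⟨K, hKc, hKx⟩ := exists_compact_mem_nhds (⟨x, hxU⟩ : U)
    refine ⟨Subtype.val '' K, hKc.image continuous_subtype_val, ?_⟩
    rw [← hU.isOpenEmbedding_subtypeVal.map_nhds_eq ⟨x, hxU⟩]
    exact Filter.image_mem_map hKx

theorem isClopen_of_forall_nonempty_inter_subset {v : ι → Set X} {T : Set X}
    (hvo : ∀ i, IsOpen (v i)) (hcov : ⋃ i, v i = univ)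
    (hT : ∀ i, (v i ∩ T).Nonempty → v i ⊆ T) : IsClopen T := by
  have hmem (x : X) : ∃ i, x ∈ v i := mem_iUnion.1 (hcov ▸ mem_univ x)
  refine ⟨⟨isOpen_iff_forall_mem_open.2 fun x hx => ?_⟩,
    isOpen_iff_forall_mem_open.2 fun x hx => ?_⟩
  · obtain ⟨i, hxi⟩ := hmem x
    exact ⟨v i, fun y hyi hyT => hx (hT i ⟨y, hyi, hyT⟩ hxi), hvo i, hxi⟩
  · obtain ⟨i, hxi⟩ := hmem x
    exact ⟨v i, hT i ⟨x, hxi, hx⟩, hvo i, hxi⟩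

def closedStar (v : ι → Set X) (K : Set X) : Set X :=
  ⋃ i ∈ {i | (v i ∩ K).Nonempty}, closure (v i)

theorem subset_closedStar {v : ι → Set X} {K : Set X} {i : ι} (h : (v i ∩ K).Nonempty) :
    v i ⊆ closedStar v K :=
  subset_closure.trans (subset_biUnion_of_mem (u := fun i => closure (v i)) h)

theorem IsCompact.closedStar {v : ι → Set X} {K : Set X} (hlf : LocallyFinite v)
    (hvc : ∀ i, IsCompact (closure (v i))) (hK : IsCompact K) : IsCompact (closedStar v K) :=
  (hlf.finite_nonempty_inter_compact hK).isCompact_biUnion fun i _ => hvc i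

theorem SigmaCompactSpace.of_locallyFinite_isCompact_closure [ConnectedSpace X]
    {v : ι → Set X} (hvo : ∀ i, IsOpen (v i)) (hcov : ⋃ i, v i = univ) (hlf : LocallyFinite v)
    (hvc : ∀ i, IsCompact (closure (v i))) : SigmaCompactSpace X := by
  obtain ⟨x₀⟩ : Nonempty X := inferInstance
  set K : ℕ → Set X := fun n => (closedStar v)^[n] {x₀} with hK
  have hKc (n : ℕ) : IsCompact (K n) := by
    induction n with
    | zero => exact isCompact_singleton
    | succ n ih =>
      simpa only [hK, Function.iterate_succ_apply'] using ih.closedStar hlf hvc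
  have hclopen : IsClopen (⋃ n, K n) := by
    refine isClopen_of_forall_nonempty_inter_subset hvo hcov fun i ⟨x, hxi, hxK⟩ => ?_
    obtain ⟨n, hxn⟩ := mem_iUnion.1 hxK
    refine (subset_closedStar ⟨x, hxi, hxn⟩).trans (subset_iUnion_of_subset (n + 1) ?_)
    simp only [hK, Function.iterate_succ_apply', subset_rfl]
  refine SigmaCompactSpace_iff_exists_compact_covering.2 ⟨K, hKc, ?_⟩
  exact hclopen.eq_univ ⟨x₀, mem_iUnion.2 ⟨0, rfl⟩⟩

theorem SigmaCompactSpace.of_connected_paracompact [ConnectedSpace X]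
    [ParacompactSpace X] [WeaklyLocallyCompactSpace X] [R1Space X] : SigmaCompactSpace X := by
  choose u huo hxu hu using fun x : X =>
    exists_isOpen_superset_and_isCompact_closure (isCompact_singleton (x := x))
  have hcov : ⋃ x, u x = univ := eq_univ_of_forall fun x => mem_iUnion.2 ⟨x, hxu x rfl⟩
  obtain ⟨v, hvo, hvcov, hlf, hvu⟩ := precise_refinement u huo hcov
  exact .of_locallyFinite_isCompact_closure hvo hvcov hlf fun x =>
    (hu x).of_isClosed_subset isClosed_closure (closure_mono (hvu x))

end

theorem statement11_general {M : Type*} [TopologicalSpace M] [ConnectedSpace M]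
    [TopologicalSpace.MetrizableSpace M]
    (hloc : ∀ x : M, ∃ (n : ℕ) (U : Set M) (V : Set (EuclideanSpace ℝ (Fin n))),
      x ∈ U ∧ IsOpen U ∧ IsOpen V ∧ Nonempty (U ≃ₜ V)) :
    SecondCountableTopology M := by
  let : MetricSpace M := TopologicalSpace.metrizableSpaceMetric M
  have : WeaklyLocallyCompactSpace M :=
    weaklyLocallyCompactSpace_of_forall_homeomorph_isOpen hloc
  have : SigmaCompactSpace M := .of_connected_paracompact
  exact EMetric.secondCountable_of_sigmaCompact M

/-- A connected, Hausdorff, locally Euclidean, metrizable topological space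
is second countable. -/
theorem statement11 {M : Type*} [TopologicalSpace M] [ConnectedSpace M] [T2Space M]
    [TopologicalSpace.MetrizableSpace M]
    (hloc : ∀ x : M, ∃ (n : ℕ) (U : Set M) (V : Set (EuclideanSpace ℝ (Fin n))),
      x ∈ U ∧ IsOpen U ∧ IsOpen V ∧ Nonempty (U ≃ₜ V)) :
    SecondCountableTopology M :=
  statement11_general hloc
end
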